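/- For any function u ∈ C¹([0,1]) and integer n ≥ 1, ∫₀¹ |u(y) - u(κₙ(y))|² dy ≤ (1/n²) ∫₀¹ |u'(t)|² dt, where κₙ(y) = ⌊ny⌋/n. -/

import Mathlib

open Real MeasureTheory

/-- Left grid point `⌊ny⌋/n`. -/
noncomputable def kappa (n : ℕ) (y : ℝ) : ℝ := (⌊(n : ℝ) * y⌋ : ℝ) / n

/-!
On each grid cell `[k/n, (k+1)/n]` the function `κₙ` is the left endpoint, so by the fundamental
theorem of calculus and Cauchy–Schwarz, `|u y - u (k/n)|² ≤ (1/n) ∫_cell |u'|²` for every `y` in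
the cell. Integrating over the cell gains another factor `1/n`, and summing over the `n` cells
gives the claim.
-/

open Set intervalIntegral

theorem sq_intervalIntegral_le_mul_integral_sq {f : ℝ → ℝ} {a b : ℝ} (hab : a ≤ b)
    (hf : IntervalIntegrable f volume a b)
    (hf2 : IntervalIntegrable (fun t => f t ^ 2) volume a b) :
    (∫ t in a..b, f t) ^ 2 ≤ (b - a) * ∫ t in a..b, f t ^ 2 := by
  set I := ∫ t in a..b, f t
  set J := ∫ t in a..b, f t ^ 2
  have hvar : ∫ t in a..b, ((b - a) * f t - I) ^ 2 = (b - a) * ((b - a) * J - I ^ 2) := by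
    have hexpand : (fun t => ((b - a) * f t - I) ^ 2)
        = fun t => (b - a) ^ 2 * f t ^ 2 - 2 * (b - a) * I * f t + I ^ 2 := by
      funext t; ring
    rw [hexpand, integral_add ((hf2.const_mul _).sub (hf.const_mul _)) intervalIntegrable_const,
      integral_sub (hf2.const_mul _) (hf.const_mul _), intervalIntegral.integral_const_mul,
      intervalIntegral.integral_const_mul, intervalIntegral.integral_const, smul_eq_mul]
    ring
  have hnonneg : 0 ≤ (b - a) * ((b - a) * J - I ^ 2) :=
    hvar ▸ integral_nonneg hab fun t _ => sq_nonneg _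
  rcases hab.eq_or_lt with rfl | hlt
  · simp [I]
  · nlinarith [nonneg_of_mul_nonneg_right hnonneg (sub_pos.2 hlt)]

section Cell

variable {u f : ℝ → ℝ} {p q : ℝ}

theorem sq_sub_le_mul_integral_sq_deriv (hpq : p ≤ q) (hu : ContinuousOn u (Icc p q))
    (hf : ContinuousOn f (Icc p q)) (hderiv : ∀ x ∈ Ioo p q, HasDerivAt u (f x) x)
    {y : ℝ} (hy : y ∈ Icc p q) :
    (u y - u p) ^ 2 ≤ (q - p) * ∫ t in p..q, f t ^ 2 := by
  have hsub : Icc p y ⊆ Icc p q := Icc_subset_Icc_right hy.2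
  rw [← integral_eq_sub_of_hasDerivAt_of_le hy.1 (hu.mono hsub)
    (fun x hx => hderiv x ⟨hx.1, hx.2.trans_le hy.2⟩)
    ((hf.mono hsub).intervalIntegrable_of_Icc hy.1)]
  calc (∫ t in p..y, f t) ^ 2 ≤ (y - p) * ∫ t in p..y, f t ^ 2 :=
        sq_intervalIntegral_le_mul_integral_sq hy.1
          ((hf.mono hsub).intervalIntegrable_of_Icc hy.1)
          (((hf.mono hsub).pow 2).intervalIntegrable_of_Icc hy.1)
    _ ≤ (q - p) * ∫ t in p..q, f t ^ 2 := by
        gcongr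
        · exact integral_nonneg hy.1 fun t _ => sq_nonneg _
        · exact hy.2
        · exact integral_mono_interval le_rfl hy.1 hy.2
            (Filter.Eventually.of_forall fun t => sq_nonneg _)
            ((hf.pow 2).intervalIntegrable_of_Icc hpq)

theorem integral_sq_sub_left_le (hpq : p ≤ q) (hu : ContinuousOn u (Icc p q))
    (hf : ContinuousOn f (Icc p q)) (hderiv : ∀ x ∈ Ioo p q, HasDerivAt u (f x) x) :
    ∫ y in p..q, (u y - u p) ^ 2 ≤ (q - p) ^ 2 * ∫ t in p..q, f t ^ 2 :=
  calc ∫ y in p..q, (u y - u p) ^ 2 ≤ ∫ _ in p..q, (q - p) * ∫ t in p..q, f t ^ 2 :=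
        integral_mono_on hpq
          (((hu.sub continuousOn_const).pow 2).intervalIntegrable_of_Icc hpq)
          intervalIntegrable_const
          fun _ hy => sq_sub_le_mul_integral_sq_deriv hpq hu hf hderiv hy
    _ = (q - p) ^ 2 * ∫ t in p..q, f t ^ 2 := by
        rw [intervalIntegral.integral_const, smul_eq_mul]; ring

end Cell

theorem kappa_eq_of_mem_Ico {n k : ℕ} (hn : 0 < n) {y : ℝ}
    (hy : y ∈ Ico ((k : ℝ) / n) ((k + 1) / n)) : kappa n y = k / n := by
  have hn' : (0 : ℝ) < n := Nat.cast_pos.2 hn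
  obtain ⟨hlo, hhi⟩ := hy
  rw [div_le_iff₀ hn'] at hlo
  rw [lt_div_iff₀ hn'] at hhi
  have hfloor : ⌊(n : ℝ) * y⌋ = k := by
    rw [Int.floor_eq_iff]
    push_cast
    constructor <;> linarith
  rw [kappa, hfloor, Int.cast_natCast]

theorem sum_integral_grid_cells {g : ℝ → ℝ} {n : ℕ} (hn : 0 < n)
    (hg : ∀ k < n, IntervalIntegrable g volume ((k : ℝ) / n) ((k + 1) / n)) :
    ∑ k ∈ Finset.range n, ∫ x in (k : ℝ) / n..(k + 1) / n, g x = ∫ x in (0 : ℝ)..1, g x := by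
  have h := sum_integral_adjacent_intervals (a := fun k : ℕ => (k : ℝ) / n) (f := g)
    (μ := volume) (n := n) (by simpa using hg)
  simpa [(Nat.cast_pos.2 hn).ne'] using h

theorem integral_sq_sub_kappa_le {u f : ℝ → ℝ} {n : ℕ} (hn : 0 < n)
    (hu : ContinuousOn u (Icc 0 1)) (hf : ContinuousOn f (Icc 0 1))
    (hderiv : ∀ x ∈ Ioo 0 1, HasDerivAt u (f x) x) :
    ∫ y in (0 : ℝ)..1, (u y - u (kappa n y)) ^ 2 ≤ 1 / (n : ℝ) ^ 2 * ∫ t in (0 : ℝ)..1, f t ^ 2 := by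
  have hn' : (0 : ℝ) < n := Nat.cast_pos.2 hn
  have hmono (k : ℕ) : (k : ℝ) / n ≤ (k + 1) / n := by gcongr; linarith
  have hend {k : ℕ} (hk : k < n) : ((k : ℝ) + 1) / n ≤ 1 :=
    (div_le_one hn').2 (by exact_mod_cast hk)
  have hcell {k : ℕ} (hk : k < n) : Icc ((k : ℝ) / n) ((k + 1) / n) ⊆ Icc 0 1 :=
    Icc_subset_Icc (by positivity) (hend hk)
  have hkappa (k : ℕ) : EqOn (fun y => (u y - u (kappa n y)) ^ 2)
      (fun y => (u y - u (k / n)) ^ 2) (Ioo ((k : ℝ) / n) ((k + 1) / n)) := fun y hy => by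
    simp only [kappa_eq_of_mem_Ico hn (Ioo_subset_Ico_self hy)]
  have hint {k : ℕ} (hk : k < n) : IntervalIntegrable (fun y => (u y - u (k / n)) ^ 2) volume
      ((k : ℝ) / n) ((k + 1) / n) :=
    (((hu.mono (hcell hk)).sub continuousOn_const).pow 2).intervalIntegrable_of_Icc (hmono k)
  calc ∫ y in (0 : ℝ)..1, (u y - u (kappa n y)) ^ 2
      = ∑ k ∈ Finset.range n, ∫ y in (k : ℝ) / n..(k + 1) / n, (u y - u (k / n)) ^ 2 := by
        rw [← sum_integral_grid_cells hn fun k hk =>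
          (hint hk).congr_uIoo (uIoo_of_le (hmono k) ▸ (hkappa k).symm)]
        exact Finset.sum_congr rfl fun k _ => integral_congr_Ioo_of_le (hmono k) (hkappa k)
    _ ≤ ∑ k ∈ Finset.range n, 1 / (n : ℝ) ^ 2 * ∫ t in (k : ℝ) / n..(k + 1) / n, f t ^ 2 := by
        refine Finset.sum_le_sum fun k hk => ?_
        have hk := Finset.mem_range.1 hk
        have hwidth : ((k : ℝ) + 1) / n - k / n = 1 / n := by field_simp; ring
        calc _ ≤ (((k : ℝ) + 1) / n - k / n) ^ 2 * ∫ t in (k : ℝ) / n..(k + 1) / n, f t ^ 2 :=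
              integral_sq_sub_left_le (hmono k) (hu.mono (hcell hk)) (hf.mono (hcell hk))
                fun x hx => hderiv x (Ioo_subset_Ioo (by positivity) (hend hk) hx)
          _ = _ := by rw [hwidth, div_pow, one_pow]
    _ = 1 / (n : ℝ) ^ 2 * ∫ t in (0 : ℝ)..1, f t ^ 2 := by
        rw [← Finset.mul_sum, sum_integral_grid_cells (g := fun t => f t ^ 2) hn fun k hk =>
          ((hf.pow 2).mono (hcell hk)).intervalIntegrable_of_Icc (hmono k)]

theorem stmt15 (u : ℝ → ℝ) (hu : ContDiffOn ℝ 1 u (Set.Icc (0 : ℝ) 1))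
    (n : ℕ) (hn : 1 ≤ n) :
    ∫ y in (0 : ℝ)..1, |u y - u (kappa n y)| ^ 2 ≤
      (1 / (n : ℝ) ^ 2) * ∫ t in (0 : ℝ)..1, |derivWithin u (Set.Icc (0 : ℝ) 1) t| ^ 2 := by
  simp only [sq_abs]
  refine integral_sq_sub_kappa_le hn hu.continuousOn
    (hu.continuousOn_derivWithin (uniqueDiffOn_Icc one_pos) le_rfl) fun x hx => ?_
  exact (hu.differentiableOn one_ne_zero x (Ioo_subset_Icc_self hx)).hasDerivWithinAt.hasDerivAt
    (Icc_mem_nhds hx.1 hx.2)
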